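/- Let Q be a quantaloid and let L ⊣ R be an adjunction between total Q-categories D and E. Then a total Q-category X is equivalent to Fix(RL) if and only if there exist dense Q-functors F : A → X and K : A → D and codense Q-functors G : C → X and H : C → E such that E(LKA, HC) = X(FA, GC) for all A ∈ A₀ and C ∈ C₀. -/

import Mathlib

universe u

/-- A quantaloid: a category whose hom-sets are complete lattices and whose
composition preserves arbitrary joins in each variable. -/
structure Quantaloid : Type (u + 1) where
  Obj : Type u
  Hom : Obj → Obj → Type u
  [lat : ∀ S T : Obj, CompleteLattice (Hom S T)]
  comp : ∀ {S T U : Obj}, Hom T U → Hom S T → Hom S U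
  one : ∀ S : Obj, Hom S S
  comp_assoc : ∀ {S T U V : Obj} (w : Hom U V) (v : Hom T U) (u : Hom S T),
      comp (comp w v) u = comp w (comp v u)
  comp_one : ∀ {S T : Obj} (u : Hom S T), comp u (one S) = u
  one_comp : ∀ {S T : Obj} (u : Hom S T), comp (one T) u = u
  comp_sSup : ∀ {S T U : Obj} (v : Hom T U) (s : Set (Hom S T)),
      comp v (sSup s) = ⨆ u ∈ s, comp v u
  sSup_comp : ∀ {S T U : Obj} (s : Set (Hom T U)) (u : Hom S T),
      comp (sSup s) u = ⨆ v ∈ s, comp v u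

attribute [instance] Quantaloid.lat

namespace Quantaloid

variable (Q : Quantaloid.{u})

/-- The left implication `w ↙ u`, characterized by `v ∘ u ≤ w ↔ v ≤ w ↙ u`. -/
def lda {S T U : Q.Obj} (w : Q.Hom S U) (u : Q.Hom S T) : Q.Hom T U :=
  sSup {v | Q.comp v u ≤ w}

/-- The right implication `v ↘ w`, characterized by `v ∘ u ≤ w ↔ u ≤ v ↘ w`. -/
def rda {S T U : Q.Obj} (v : Q.Hom T U) (w : Q.Hom S U) : Q.Hom S T :=
  sSup {u | Q.comp v u ≤ w}

/-- Transport of a `Q`-arrow along equalities of objects. -/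
def cast {S S' T T' : Q.Obj} (hS : S = S') (hT : T = T') (u : Q.Hom S T) : Q.Hom S' T' :=
  hS ▸ hT ▸ u

variable {Q}

theorem comp_mono_left {S T U : Q.Obj} {v v' : Q.Hom T U} (h : v ≤ v') (u : Q.Hom S T) :
    Q.comp v u ≤ Q.comp v' u := by
  have h1 : sSup ({v, v'} : Set (Q.Hom T U)) = v' := by
    rw [sSup_pair]; exact sup_eq_right.mpr h
  calc Q.comp v u ≤ ⨆ x ∈ ({v, v'} : Set (Q.Hom T U)), Q.comp x u :=
        le_iSup₂ (f := fun x _ => Q.comp x u) v (by simp)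
    _ = Q.comp (sSup ({v, v'} : Set (Q.Hom T U))) u := (Q.sSup_comp _ _).symm
    _ = Q.comp v' u := by rw [h1]

theorem comp_mono_right {S T U : Q.Obj} (v : Q.Hom T U) {u u' : Q.Hom S T} (h : u ≤ u') :
    Q.comp v u ≤ Q.comp v u' := by
  have h1 : sSup ({u, u'} : Set (Q.Hom S T)) = u' := by
    rw [sSup_pair]; exact sup_eq_right.mpr h
  calc Q.comp v u ≤ ⨆ x ∈ ({u, u'} : Set (Q.Hom S T)), Q.comp v x :=
        le_iSup₂ (f := fun x _ => Q.comp v x) u (by simp)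
    _ = Q.comp v (sSup ({u, u'} : Set (Q.Hom S T))) := (Q.comp_sSup _ _).symm
    _ = Q.comp v u' := by rw [h1]

theorem comp_lda_le {S T U : Q.Obj} (w : Q.Hom S U) (u : Q.Hom S T) :
    Q.comp (Q.lda w u) u ≤ w := by
  rw [lda, Q.sSup_comp]
  exact iSup₂_le fun v hv => hv

theorem comp_rda_le {S T U : Q.Obj} (v : Q.Hom T U) (w : Q.Hom S U) :
    Q.comp v (Q.rda v w) ≤ w := by
  rw [rda, Q.comp_sSup]
  exact iSup₂_le fun u hu => hu

theorem le_lda {S T U : Q.Obj} {u : Q.Hom S T} {v : Q.Hom T U} {w : Q.Hom S U} :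
    Q.comp v u ≤ w ↔ v ≤ Q.lda w u :=
  ⟨fun h => le_sSup h, fun h => le_trans (comp_mono_left h u) (comp_lda_le w u)⟩

theorem le_rda {S T U : Q.Obj} {u : Q.Hom S T} {v : Q.Hom T U} {w : Q.Hom S U} :
    Q.comp v u ≤ w ↔ u ≤ Q.rda v w :=
  ⟨fun h => le_sSup h, fun h => le_trans (comp_mono_right v h) (comp_rda_le v w)⟩

theorem cast_cast {S S' S'' T T' T'' : Q.Obj} (h1 : S = S') (h2 : T = T')
    (h3 : S' = S'') (h4 : T' = T'') (u : Q.Hom S T) :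
    Q.cast h3 h4 (Q.cast h1 h2 u) = Q.cast (h1.trans h3) (h2.trans h4) u := by
  subst h1; subst h2; subst h3; subst h4; rfl

theorem cast_mono {S S' T T' : Q.Obj} (hS : S = S') (hT : T = T') {u v : Q.Hom S T}
    (h : u ≤ v) : Q.cast hS hT u ≤ Q.cast hS hT v := by
  subst hS; subst hT; exact h

end Quantaloid
/-! ## Quantaloid-enriched categories -/

/-- A `Q`-category: a class of objects with extents and hom-arrows in `Q`. -/
structure QCat (Q : Quantaloid.{u}) : Type (u + 1) where
  Obj : Type u
  ext : Obj → Q.Obj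
  hom : ∀ X Y : Obj, Q.Hom (ext X) (ext Y)
  one_le : ∀ X, Q.one (ext X) ≤ hom X X
  comp_le : ∀ X Y Z, Q.comp (hom Y Z) (hom X Y) ≤ hom X Z

/-- A `Q`-relation between (the object classes of) two `Q`-categories. -/
abbrev QRel (Q : Quantaloid.{u}) (D E : QCat Q) : Type u :=
  ∀ (X : D.Obj) (Y : E.Obj), Q.Hom (D.ext X) (E.ext Y)

/-- The hom `Q`-relation of a `Q`-category. -/
def QCat.homRel {Q : Quantaloid.{u}} (E : QCat Q) : QRel Q E E := fun X Y => E.hom X Y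

/-- Composition of `Q`-relations. -/
def QRel.comp {Q : Quantaloid.{u}} {C D E : QCat Q} (Ψ : QRel Q D E) (Φ : QRel Q C D) :
    QRel Q C E :=
  fun X Z => ⨆ Y : D.Obj, Q.comp (Ψ Y Z) (Φ X Y)

/-- Left implication of `Q`-relations: `(Ξ ↙ Φ)(Y,Z) = ⋀_X Ξ(X,Z) ↙ Φ(X,Y)`. -/
def QRel.lda {Q : Quantaloid.{u}} {C D E : QCat Q} (Ξ : QRel Q C E) (Φ : QRel Q C D) :
    QRel Q D E :=
  fun Y Z => ⨅ X : C.Obj, Q.lda (Ξ X Z) (Φ X Y)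

/-- Right implication of `Q`-relations: `(Ψ ↘ Ξ)(X,Y) = ⋀_Z Ψ(Y,Z) ↘ Ξ(X,Z)`. -/
def QRel.rda {Q : Quantaloid.{u}} {C D E : QCat Q} (Ψ : QRel Q D E) (Ξ : QRel Q C E) :
    QRel Q C D :=
  fun X Y => ⨅ Z : E.Obj, Q.rda (Ψ Y Z) (Ξ X Z)

/-- A `Q`-relation between `Q`-categories is a `Q`-distributor if `E ∘ Φ ∘ D ≤ Φ`. -/
def IsDist {Q : Quantaloid.{u}} {D E : QCat Q} (Φ : QRel Q D E) : Prop :=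
  QRel.comp E.homRel (QRel.comp Φ D.homRel) ≤ Φ

/-- The one-object `Q`-category on an object `T` of `Q`, with hom `1_T`. -/
def singleQCat (Q : Quantaloid.{u}) (T : Q.Obj) : QCat Q where
  Obj := PUnit
  ext _ := T
  hom _ _ := Q.one T
  one_le _ := le_rfl
  comp_le _ _ _ := le_of_eq (Q.comp_one _)

/-- A sink of extent `T` on a `Q`-category `E`: a `Q`-relation `E₀ ⇸ {T}`. -/
abbrev Sink {Q : Quantaloid.{u}} (E : QCat Q) (T : Q.Obj) : Type u :=
  QRel Q E (singleQCat Q T)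

/-- A source of extent `T` on a `Q`-category `E`: a `Q`-relation `{T} ⇸ E₀`. -/
abbrev Source {Q : Quantaloid.{u}} (E : QCat Q) (T : Q.Obj) : Type u :=
  QRel Q (singleQCat Q T) E

/-- `Y` is the supremum of the sink `σ`: `Y` has extent `T` and `E(Y,−) = E ↙ σ`. -/
structure IsSup {Q : Quantaloid.{u}} (E : QCat Q) {T : Q.Obj} (σ : Sink E T) (Y : E.Obj) :
    Prop where
  ext : E.ext Y = T
  hom : ∀ Z : E.Obj, Q.cast ext rfl (E.hom Y Z) = QRel.lda E.homRel σ PUnit.unit Z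

/-- `Y` is the infimum of the source `τ`: `Y` has extent `T` and `E(−,Y) = τ ↘ E`. -/
structure IsInf {Q : Quantaloid.{u}} (E : QCat Q) {T : Q.Obj} (τ : Source E T) (Y : E.Obj) :
    Prop where
  ext : E.ext Y = T
  hom : ∀ Z : E.Obj, Q.cast rfl ext (E.hom Z Y) = QRel.rda τ E.homRel Z PUnit.unit

/-- A `Q`-category is total if every sink on it has a supremum. -/
def QCat.Total {Q : Quantaloid.{u}} (E : QCat Q) : Prop :=
  ∀ (T : Q.Obj) (σ : Sink E T), ∃ Y : E.Obj, IsSup E σ Y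

/-- A `Q`-functor between `Q`-categories. -/
structure QFun {Q : Quantaloid.{u}} (D E : QCat Q) : Type u where
  obj : D.Obj → E.Obj
  ext : ∀ X, E.ext (obj X) = D.ext X
  hom_le : ∀ X Y, D.hom X Y ≤ Q.cast (ext X) (ext Y) (E.hom (obj X) (obj Y))

/-- The graph `F_♮(X,Y) = E(FX,Y)` of a `Q`-functor. -/
def QFun.graph {Q : Quantaloid.{u}} {D E : QCat Q} (F : QFun D E) : QRel Q D E :=
  fun X Y => Q.cast (F.ext X) rfl (E.hom (F.obj X) Y)

/-- The cograph `F^♮(Y,X) = E(Y,FX)` of a `Q`-functor. -/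
def QFun.cograph {Q : Quantaloid.{u}} {D E : QCat Q} (F : QFun D E) : QRel Q E D :=
  fun Y X => Q.cast rfl (F.ext X) (E.hom Y (F.obj X))

/-- `Y` is the colimit of `F` weighted by the sink `σ`: `E(Y,−) = F_♮ ↙ σ`. -/
structure IsColim {Q : Quantaloid.{u}} {D E : QCat Q} (F : QFun D E) {T : Q.Obj}
    (σ : Sink D T) (Y : E.Obj) : Prop where
  ext : E.ext Y = T
  hom : ∀ Z : E.Obj, Q.cast ext rfl (E.hom Y Z) = QRel.lda F.graph σ PUnit.unit Z

/-- `Y` is the limit of `F` weighted by the source `τ`: `E(−,Y) = τ ↘ F^♮`. -/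
structure IsLim {Q : Quantaloid.{u}} {D E : QCat Q} (F : QFun D E) {T : Q.Obj}
    (τ : Source D T) (Y : E.Obj) : Prop where
  ext : E.ext Y = T
  hom : ∀ Z : E.Obj, Q.cast rfl ext (E.hom Z Y) = QRel.rda τ F.cograph Z PUnit.unit

/-- A `Q`-functor is dense if every object of its codomain is a weighted colimit of it. -/
def QFun.Dense {Q : Quantaloid.{u}} {D E : QCat Q} (F : QFun D E) : Prop :=
  ∀ Y : E.Obj, ∃ (T : Q.Obj) (σ : Sink D T), IsColim F σ Y

/-- A `Q`-functor is codense if every object of its codomain is a weighted limit of it. -/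
def QFun.Codense {Q : Quantaloid.{u}} {D E : QCat Q} (F : QFun D E) : Prop :=
  ∀ Y : E.Obj, ∃ (T : Q.Obj) (τ : Source D T), IsLim F τ Y

/-- The underlying (pre)order of a `Q`-category: `X ≤ Y` iff `|X| = |Y|` and
`1_{|X|} ≤ E(X,Y)`. -/
def QCat.le {Q : Quantaloid.{u}} (E : QCat Q) (X Y : E.Obj) : Prop :=
  ∃ h : E.ext X = E.ext Y, Q.cast rfl h (Q.one (E.ext X)) ≤ E.hom X Y

/-- `X ≅ Y` in the underlying order of a `Q`-category. -/
def QCat.iso {Q : Quantaloid.{u}} (E : QCat Q) (X Y : E.Obj) : Prop :=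
  E.le X Y ∧ E.le Y X

/-- A `Q`-category is separated if isomorphic objects are equal. -/
def QCat.Separated {Q : Quantaloid.{u}} (E : QCat Q) : Prop :=
  ∀ X Y : E.Obj, E.iso X Y → X = Y

/-- The identity `Q`-functor. -/
def QFun.id {Q : Quantaloid.{u}} (E : QCat Q) : QFun E E where
  obj X := X
  ext _ := rfl
  hom_le _ _ := le_rfl

/-- Composition of `Q`-functors. -/
def QFun.comp {Q : Quantaloid.{u}} {C D E : QCat Q} (G : QFun D E) (F : QFun C D) :
    QFun C E where
  obj X := G.obj (F.obj X)
  ext X := (G.ext (F.obj X)).trans (F.ext X)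
  hom_le X Y := by
    refine le_trans (F.hom_le X Y) ?_
    refine le_trans (Quantaloid.cast_mono (F.ext X) (F.ext Y)
      (G.hom_le (F.obj X) (F.obj Y))) ?_
    rw [Quantaloid.cast_cast]

/-- The full `Q`-subcategory of `E` on the objects satisfying `P`. -/
def QCat.full {Q : Quantaloid.{u}} (E : QCat Q) (P : E.Obj → Prop) : QCat Q where
  Obj := {X : E.Obj // P X}
  ext X := E.ext X.1
  hom X Y := E.hom X.1 Y.1
  one_le X := E.one_le X.1
  comp_le X Y Z := E.comp_le X.1 Y.1 Z.1

/-- The inclusion `Q`-functor of a full `Q`-subcategory. -/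
def QCat.incl {Q : Quantaloid.{u}} (E : QCat Q) (P : E.Obj → Prop) :
    QFun (E.full P) E where
  obj X := X.1
  ext _ := rfl
  hom_le _ _ := le_rfl

/-- The full `Q`-subcategory of fixed points of an endo-`Q`-functor. -/
def QCat.fix {Q : Quantaloid.{u}} (E : QCat Q) (F : QFun E E) : QCat Q :=
  E.full (fun X => E.iso (F.obj X) X)

/-- Adjoint `Q`-functors: `L ⊣ R` iff `E(LX,Y) = D(X,RY)`. -/
def QAdj {Q : Quantaloid.{u}} {D E : QCat Q} (L : QFun D E) (R : QFun E D) : Prop :=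
  ∀ (X : D.Obj) (Y : E.Obj), L.graph X Y = Q.cast rfl (R.ext Y) (D.hom X (R.obj Y))

/-- An essentially surjective `Q`-functor. -/
def QFun.EssSurj {Q : Quantaloid.{u}} {D E : QCat Q} (F : QFun D E) : Prop :=
  ∀ Y : E.Obj, ∃ X : D.Obj, E.iso Y (F.obj X)

/-- Equivalence of `Q`-categories. -/
def QEquiv {Q : Quantaloid.{u}} (D E : QCat Q) : Prop :=
  ∃ (F : QFun D E) (G : QFun E D),
    (∀ X, D.iso (G.obj (F.obj X)) X) ∧ (∀ Y, E.iso (F.obj (G.obj Y)) Y)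

/-- Isomorphism of `Q`-categories. -/
def QIso {Q : Quantaloid.{u}} (D E : QCat Q) : Prop :=
  ∃ (F : QFun D E) (G : QFun E D),
    (∀ X, G.obj (F.obj X) = X) ∧ (∀ Y, F.obj (G.obj Y) = Y)

/-- Tensor: `Y = f ⊗ X` iff `E(Y,−) = E(X,−) ↙ f`. -/
structure IsTensor {Q : Quantaloid.{u}} (E : QCat Q) {T : Q.Obj} (X : E.Obj)
    (f : Q.Hom (E.ext X) T) (Y : E.Obj) : Prop where
  ext : E.ext Y = T
  hom : ∀ Z : E.Obj, Q.cast ext rfl (E.hom Y Z) = Q.lda (E.hom X Z) f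

/-- Cotensor: `Y = g ⤳ X` iff `E(−,Y) = g ↘ E(−,X)`. -/
structure IsCotensor {Q : Quantaloid.{u}} (E : QCat Q) {T : Q.Obj} (X : E.Obj)
    (g : Q.Hom T (E.ext X)) (Y : E.Obj) : Prop where
  ext : E.ext Y = T
  hom : ∀ Z : E.Obj, Q.cast rfl ext (E.hom Z Y) = Q.rda g (E.hom Z X)
/-! ## The Isbell adjunction and its fixed points -/

section MCat

variable {Q : Quantaloid.{u}} {D E : QCat Q}

/-- The Isbell upper map of a `Q`-distributor `Φ : D ⇸ E` on (pre)sheaves: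
`Φ↑σ = Φ ↙ σ`. -/
def isbellUp (Φ : QRel Q D E) {T : Q.Obj} (σ : Sink D T) : Source E T :=
  QRel.lda Φ σ

/-- The Isbell lower map of a `Q`-distributor `Φ : D ⇸ E` on (co)presheaves:
`Φ↓τ = τ ↘ Φ`. -/
def isbellDown (Φ : QRel Q D E) {T : Q.Obj} (τ : Source E T) : Sink D T :=
  QRel.rda τ Φ

/-- `MΦ = Fix(Φ↓Φ↑)`: the full `Q`-subcategory of the presheaf `Q`-category of `D`
consisting of the presheaves fixed by the Isbell adjunction induced by `Φ`. -/
def MCat (Φ : QRel Q D E) : QCat Q where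
  Obj := Σ T : Q.Obj, {σ : Sink D T // IsDist σ ∧ isbellDown Φ (isbellUp Φ σ) = σ}
  ext p := p.1
  hom p q := QRel.lda q.2.1 p.2.1 PUnit.unit PUnit.unit
  one_le p := by
    refine le_iInf fun X => Quantaloid.le_lda.mp ?_
    exact le_of_eq (Q.one_comp _)
  comp_le p q r := by
    refine le_iInf fun X => Quantaloid.le_lda.mp ?_
    refine le_trans (le_of_eq (Q.comp_assoc _ _ _)) ?_
    have h1 : Q.comp (QRel.lda q.2.1 p.2.1 PUnit.unit PUnit.unit) (p.2.1 X PUnit.unit) ≤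
        q.2.1 X PUnit.unit := by
      refine le_trans (Quantaloid.comp_mono_left (iInf_le _ X) _) ?_
      exact Quantaloid.comp_lda_le _ _
    refine le_trans (Quantaloid.comp_mono_right _ h1) ?_
    refine le_trans (Quantaloid.comp_mono_left (iInf_le _ X) _) ?_
    exact Quantaloid.comp_lda_le _ _

end MCat
/-! ## Concrete categories over a base category -/

open CategoryTheory

/-- Transport of a morphism of `B` along equalities of objects. -/
def hcast {B : Type u} [Category.{u} B] {S S' T T' : B} (hS : S = S') (hT : T = T')
    (f : S ⟶ T) : S' ⟶ T' :=
  hS ▸ hT ▸ f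

/-- Transport of a set of morphisms of `B` along equalities of objects. -/
def scast {B : Type u} [Category.{u} B] {S S' T T' : B} (hS : S = S') (hT : T = T')
    (s : Set (S ⟶ T)) : Set (S' ⟶ T') :=
  hcast hS hT '' s

theorem hcast_hcast {B : Type u} [Category.{u} B] {S S' S'' T T' T'' : B}
    (h1 : S = S') (h2 : T = T') (h3 : S' = S'') (h4 : T' = T'') (f : S ⟶ T) :
    hcast h3 h4 (hcast h1 h2 f) = hcast (h1.trans h3) (h2.trans h4) f := by
  subst h1; subst h2; subst h3; subst h4; rfl

/-- A concrete category over a base category `B`, described by its objects, extents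
and hom-sets of `B`-morphisms. -/
structure ConcCat (B : Type u) [Category.{u} B] : Type (u + 1) where
  Obj : Type u
  ext : Obj → B
  hom : ∀ X Y : Obj, Set (ext X ⟶ ext Y)
  id_mem : ∀ X, 𝟙 (ext X) ∈ hom X X
  comp_mem : ∀ {X Y Z : Obj} {f : ext X ⟶ ext Y} {g : ext Y ⟶ ext Z},
      f ∈ hom X Y → g ∈ hom Y Z → f ≫ g ∈ hom X Z

variable {B : Type u} [Category.{u} B]

/-- A concrete functor over `B`. -/
structure ConcFun (D E : ConcCat B) : Type u where
  obj : D.Obj → E.Obj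
  ext : ∀ X, E.ext (obj X) = D.ext X
  mem : ∀ {X Y : D.Obj} {f : D.ext X ⟶ D.ext Y}, f ∈ D.hom X Y →
      hcast (ext X).symm (ext Y).symm f ∈ E.hom (obj X) (obj Y)

/-- The underlying (pre)order of a concrete category: `X ≤ Y` iff `|X| = |Y|` and
`1_{|X|} ∈ E(X,Y)`. -/
def ConcCat.le (E : ConcCat B) (X Y : E.Obj) : Prop :=
  ∃ h : E.ext X = E.ext Y, hcast rfl h (𝟙 (E.ext X)) ∈ E.hom X Y

/-- `X ≅ Y` in the underlying order of a concrete category. -/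
def ConcCat.iso (E : ConcCat B) (X Y : E.Obj) : Prop :=
  E.le X Y ∧ E.le Y X

/-- The identity concrete functor. -/
def ConcFun.id (E : ConcCat B) : ConcFun E E where
  obj X := X
  ext _ := rfl
  mem hf := hf

/-- Composition of concrete functors. -/
def ConcFun.comp {C D E : ConcCat B} (G : ConcFun D E) (F : ConcFun C D) :
    ConcFun C E where
  obj X := G.obj (F.obj X)
  ext X := (G.ext (F.obj X)).trans (F.ext X)
  mem {X Y f} hf := by
    have h := G.mem (F.mem hf)
    rw [hcast_hcast] at h
    exact h

/-- The full concrete subcategory on the objects satisfying `P`. -/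
def ConcCat.full (E : ConcCat B) (P : E.Obj → Prop) : ConcCat B where
  Obj := {X : E.Obj // P X}
  ext X := E.ext X.1
  hom X Y := E.hom X.1 Y.1
  id_mem X := E.id_mem X.1
  comp_mem hf hg := E.comp_mem hf hg

/-- The inclusion concrete functor of a full subcategory. -/
def ConcCat.incl (E : ConcCat B) (P : E.Obj → Prop) : ConcFun (E.full P) E where
  obj X := X.1
  ext _ := rfl
  mem hf := hf

/-- The full subcategory of fixed points of an endo concrete functor. -/
def ConcCat.fix (E : ConcCat B) (F : ConcFun E E) : ConcCat B :=
  E.full (fun X => E.iso (F.obj X) X)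

/-- A Galois correspondence `(L,R)` between concrete categories:
`E(LX,Y) = D(X,RY)` as subsets of `B(|X|,|Y|)`. -/
def Galois {D E : ConcCat B} (L : ConcFun D E) (R : ConcFun E D) : Prop :=
  ∀ (X : D.Obj) (Y : E.Obj),
    scast (L.ext X) rfl (E.hom (L.obj X) Y) = scast rfl (R.ext Y) (D.hom X (R.obj Y))

/-- An essentially surjective concrete functor. -/
def ConcFun.EssSurj {D E : ConcCat B} (F : ConcFun D E) : Prop :=
  ∀ Y : E.Obj, ∃ X : D.Obj, E.iso Y (F.obj X)

/-- Concrete equivalence of concrete categories. -/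
def ConcEquiv (D E : ConcCat B) : Prop :=
  ∃ (F : ConcFun D E) (G : ConcFun E D),
    (∀ X, D.iso (G.obj (F.obj X)) X) ∧ (∀ Y, E.iso (F.obj (G.obj Y)) Y)

/-- `Y` is an initial lifting of the `E`-structured source `(g_i : T → |X_i|)`. -/
structure IsInitialLifting (E : ConcCat B) {T : B} {ι : Type u} (X : ι → E.Obj)
    (g : ∀ i, T ⟶ E.ext (X i)) (Y : E.Obj) : Prop where
  ext : E.ext Y = T
  mem : ∀ i, hcast ext.symm rfl (g i) ∈ E.hom Y (X i)
  initial : ∀ (Z : E.Obj) (f : E.ext Z ⟶ T),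
      (∀ i, f ≫ g i ∈ E.hom Z (X i)) → hcast rfl ext.symm f ∈ E.hom Z Y

/-- `Y` is a final lifting of the `E`-structured sink `(f_i : |X_i| → T)`. -/
structure IsFinalLifting (E : ConcCat B) {T : B} {ι : Type u} (X : ι → E.Obj)
    (f : ∀ i, E.ext (X i) ⟶ T) (Y : E.Obj) : Prop where
  ext : E.ext Y = T
  mem : ∀ i, hcast rfl ext.symm (f i) ∈ E.hom (X i) Y
  final : ∀ (Z : E.Obj) (g : T ⟶ E.ext Z),
      (∀ i, f i ≫ g ∈ E.hom (X i) Z) → hcast ext.symm rfl g ∈ E.hom Y Z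

/-- A concrete category is topological over `B` if every structured source admits
an initial lifting. -/
def Topological (E : ConcCat B) : Prop :=
  ∀ (T : B) (ι : Type u) (X : ι → E.Obj) (g : ∀ i, T ⟶ E.ext (X i)),
    ∃ Y : E.Obj, IsInitialLifting E X g Y

/-- A concrete functor `F : D → E` is initially dense if every object of `E` is the
domain of an initial source with codomains in the image of `F`. -/
def InitiallyDense {D E : ConcCat B} (F : ConcFun D E) : Prop :=
  ∀ Y : E.Obj, ∃ (ι : Type u) (X : ι → D.Obj) (g : ∀ i, E.ext Y ⟶ E.ext (F.obj (X i))),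
    (∀ i, g i ∈ E.hom Y (F.obj (X i))) ∧
    ∀ (Z : E.Obj) (f : E.ext Z ⟶ E.ext Y),
      (∀ i, f ≫ g i ∈ E.hom Z (F.obj (X i))) → f ∈ E.hom Z Y

/-- A concrete functor `F : D → E` is finally dense if every object of `E` is the
codomain of a final sink with domains in the image of `F`. -/
def FinallyDense {D E : ConcCat B} (F : ConcFun D E) : Prop :=
  ∀ Y : E.Obj, ∃ (ι : Type u) (X : ι → D.Obj) (f : ∀ i, E.ext (F.obj (X i)) ⟶ E.ext Y),
    (∀ i, f i ∈ E.hom (F.obj (X i)) Y) ∧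
    ∀ (Z : E.Obj) (g : E.ext Y ⟶ E.ext Z),
      (∀ i, f i ≫ g ∈ E.hom (F.obj (X i)) Z) → g ∈ E.hom Y Z
/-! ## The free quantaloid and the `QB`-category associated to a concrete category -/

/-- The free quantaloid on a category `B`: hom-lattices are powersets of hom-sets,
with elementwise composition. -/
def freeQuantaloid (B : Type u) [Category.{u} B] : Quantaloid.{u} where
  Obj := B
  Hom S T := Set (S ⟶ T)
  lat _ _ := inferInstance
  comp := fun {S T U} g f => {h | ∃ a ∈ f, ∃ b ∈ g, a ≫ b = h}
  one S := {𝟙 S}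
  comp_assoc := by
    intro S T U V w v u
    ext h
    constructor
    · rintro ⟨a, ha, b, ⟨c, hc, d, hd, rfl⟩, rfl⟩
      exact ⟨a ≫ c, ⟨a, ha, c, hc, rfl⟩, d, hd, by simp⟩
    · rintro ⟨a, ⟨c, hc, e, he, rfl⟩, b, hb, rfl⟩
      exact ⟨c, hc, e ≫ b, ⟨e, he, b, hb, rfl⟩, by simp⟩
  comp_one := by
    intro S T u
    ext h
    simp
  one_comp := by
    intro S T u
    ext h
    simp
  comp_sSup := by
    intro S T U v s
    ext h
    simp only [Set.sSup_eq_sUnion, Set.mem_sUnion, Set.iSup_eq_iUnion, Set.mem_iUnion,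
      Set.mem_setOf_eq]
    constructor
    · rintro ⟨a, ⟨t, ht, hat⟩, b, hb, rfl⟩
      exact ⟨t, ht, a, hat, b, hb, rfl⟩
    · rintro ⟨t, ht, a, hat, b, hb, rfl⟩
      exact ⟨a, ⟨t, ht, hat⟩, b, hb, rfl⟩
  sSup_comp := by
    intro S T U s u
    ext h
    simp only [Set.sSup_eq_sUnion, Set.mem_sUnion, Set.iSup_eq_iUnion, Set.mem_iUnion,
      Set.mem_setOf_eq]
    constructor
    · rintro ⟨a, ha, b, ⟨t, ht, hbt⟩, rfl⟩
      exact ⟨t, ht, a, ha, b, hbt, rfl⟩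
    · rintro ⟨t, ht, a, ha, b, hbt, rfl⟩
      exact ⟨a, ha, b, ⟨t, ht, hbt⟩, rfl⟩

variable {B : Type u} [Category.{u} B]

instance {S T : B} : Membership (S ⟶ T) ((freeQuantaloid B).Hom S T) :=
  inferInstanceAs (Membership (S ⟶ T) (Set (S ⟶ T)))

theorem mem_qcast {S S' T T' : B} (hS : S = S') (hT : T = T')
    (s : Set (S ⟶ T)) (f : S' ⟶ T') :
    f ∈ (freeQuantaloid B).cast hS hT s ↔ hcast hS.symm hT.symm f ∈ s := by
  subst hS; subst hT; exact Iff.rfl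

/-- The `QB`-category associated to a concrete category over `B`. -/
def ConcCat.bar (E : ConcCat B) : QCat (freeQuantaloid B) where
  Obj := E.Obj
  ext := E.ext
  hom := E.hom
  one_le X := by
    intro h hh
    rcases hh with rfl
    exact E.id_mem X
  comp_le X Y Z := by
    rintro h ⟨a, ha, b, hb, rfl⟩
    exact E.comp_mem ha hb

/-- The `QB`-functor associated to a concrete functor over `B`. -/
def ConcFun.bar {D E : ConcCat B} (F : ConcFun D E) : QFun D.bar E.bar where
  obj := F.obj
  ext := F.ext
  hom_le X Y := by
    intro f hf
    exact (mem_qcast (F.ext X) (F.ext Y) _ f).mpr (F.mem hf)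

/-- The source on the `QB`-category `Ē` associated to an `E`-structured source
`(g_i : T → |X_i|)`, given by `τ̄(X) = {g_i ∣ X_i = X}`. -/
def barSource (E : ConcCat B) {T : B} {ι : Type u} (X : ι → E.Obj)
    (g : ∀ i, T ⟶ E.ext (X i)) : Source E.bar T :=
  fun _ Z => {f | ∃ (i : ι) (h : X i = Z), hcast rfl (congrArg E.ext h) (g i) = f}

/-- The sink on the `QB`-category `Ē` associated to an `E`-structured sink
`(f_i : |X_i| → T)`, given by `σ̄(X) = {f_i ∣ X_i = X}`. -/
def barSink (E : ConcCat B) {T : B} {ι : Type u} (X : ι → E.Obj)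
    (f : ∀ i, E.ext (X i) ⟶ T) : Sink E.bar T :=
  fun Z _ => {h | ∃ (i : ι) (hE : X i = Z), hcast (congrArg E.ext hE) rfl (f i) = h}

/-!
For `⇐`, send `x ∈ X` to `Φx = colim_{X(F-,x)} K` and `w ∈ D` to `Ψw = colim_{D(K-,w)} F`,
which exist by totality. Whenever `d = colim_σ K` and `x = colim_σ F` for a common weight `σ`,
the left adjoint `L` preserves the colimit, so the compatibility condition gives
`E(Ld, H-) = X(x, G-)`; codensity of `H` makes `Ld` the limit of `H` weighted by `X(x, G-)`, the
right adjoint `R` preserves it, and codensity of `G` then yields `D(K-, RLd) = X(F-, x)`.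
For `d = Φx` this shows by density of `K` that `RLΦx ≅ Φx`, and that `Φx` and `x` are colimits
of `K` and `F` with the same weight, so `ΨΦx ≅ x`; for `d = w` a fixed point it gives
`D(K-, w) = X(F-, Ψw)`, so `ΦΨw ≅ w`.

For `⇒`, take `K` and `H` to be identities and `F = Ψ ∘ R ∘ L`, `G = Ψ ∘ R` for the
equivalence `Ψ : Fix(RL) → X`; these are essentially surjective, and the compatibility condition
becomes `E(Ld, e) = D(RLd, Re)`.
-/

namespace Quantaloid

variable {Q : Quantaloid.{u}}

theorem cast_rfl {S T : Q.Obj} (u : Q.Hom S T) : Q.cast rfl rfl u = u := rfl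

theorem cast_heq {S S' T T' : Q.Obj} (hS : S = S') (hT : T = T') (u : Q.Hom S T) :
    HEq (Q.cast hS hT u) u := by
  subst hS hT; rfl

theorem cast_eq_iff_heq {S S' T T' : Q.Obj} (hS : S = S') (hT : T = T')
    {u : Q.Hom S T} {v : Q.Hom S' T'} : Q.cast hS hT u = v ↔ HEq u v := by
  subst hS hT; exact heq_iff_eq.symm

/- Arrows whose extents are only propositionally equal are compared with `HEq`;
by this lemma that is the same as equality after `Quantaloid.cast`. -/
theorem cast_eq_cast_iff_heq {S S' T T' U V : Q.Obj} (hS : S = S') (hT : T = T')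
    (hU : U = S') (hV : V = T') {u : Q.Hom S T} {v : Q.Hom U V} :
    Q.cast hS hT u = Q.cast hU hV v ↔ HEq u v := by
  subst hS hT
  rw [eq_comm, cast_eq_iff_heq, cast_rfl, heq_comm]

theorem le_of_le_of_heq {S S' T T' : Q.Obj} (hS : S = S') (hT : T = T') {u v : Q.Hom S T}
    {u' v' : Q.Hom S' T'} (hu : HEq u u') (hv : HEq v v') (h : u ≤ v) : u' ≤ v' := by
  subst hS hT
  rwa [← eq_of_heq hu, ← eq_of_heq hv]

theorem le_cast_iff {S S' T T' : Q.Obj} (hS : S = S') (hT : T = T')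
    {u : Q.Hom S' T'} {v : Q.Hom S T} :
    u ≤ Q.cast hS hT v ↔ Q.cast hS.symm hT.symm u ≤ v := by
  subst hS hT; exact Iff.rfl

theorem cast_le_cast_iff {S S' T T' : Q.Obj} (hS : S = S') (hT : T = T')
    {u v : Q.Hom S T} : Q.cast hS hT u ≤ Q.cast hS hT v ↔ u ≤ v := by
  subst hS hT; exact Iff.rfl

theorem cast_one {S T : Q.Obj} (h : S = T) : Q.cast h h (Q.one S) = Q.one T := by
  subst h; rfl

theorem comp_cast_one {S T U : Q.Obj} (h : S = T) (v : Q.Hom T U) :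
    Q.comp v (Q.cast rfl h (Q.one S)) = Q.cast h.symm rfl v := by
  subst h; exact Q.comp_one v

theorem cast_one_comp {S T U : Q.Obj} (h : T = S) (u : Q.Hom U S) :
    Q.comp (Q.cast h rfl (Q.one T)) u = Q.cast rfl h.symm u := by
  subst h; exact Q.one_comp u

theorem one_cast_comp {S T U : Q.Obj} (h : T = S) (u : Q.Hom U T) :
    Q.comp (Q.cast rfl h (Q.one T)) u = Q.cast rfl h u := by
  subst h; exact Q.one_comp u

theorem cast_comp_cast {S S' T T' U U' : Q.Obj} (h1 : S = S') (h2 : T = T')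
    (h3 : U = U') (v : Q.Hom T U) (u : Q.Hom S T) :
    Q.comp (Q.cast h2 h3 v) (Q.cast h1 h2 u) = Q.cast h1 h3 (Q.comp v u) := by
  subst h1 h2 h3; rfl

theorem cast_lda {S S' T T' U U' : Q.Obj} (h1 : S = S') (h2 : T = T') (h3 : U = U')
    (w : Q.Hom S U) (u : Q.Hom S T) :
    Q.cast h2 h3 (Q.lda w u) = Q.lda (Q.cast h1 h3 w) (Q.cast h1 h2 u) := by
  subst h1 h2 h3; rfl

theorem cast_rda {S S' T T' U U' : Q.Obj} (h1 : S = S') (h2 : T = T') (h3 : U = U')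
    (v : Q.Hom T U) (w : Q.Hom S U) :
    Q.cast h1 h2 (Q.rda v w) = Q.rda (Q.cast h2 h3 v) (Q.cast h1 h3 w) := by
  subst h1 h2 h3; rfl

theorem cast_iInf {ι : Sort*} {S S' T T' : Q.Obj} (hS : S = S') (hT : T = T')
    (f : ι → Q.Hom S T) : Q.cast hS hT (⨅ i, f i) = ⨅ i, Q.cast hS hT (f i) := by
  subst hS hT; rfl

theorem lda_heq_lda {S S' T U : Q.Obj} (h : S = S') {w : Q.Hom S U} {w' : Q.Hom S' U}
    {v : Q.Hom S T} {v' : Q.Hom S' T} (hw : HEq w w') (hv : HEq v v') :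
    Q.lda w v = Q.lda w' v' := by
  subst h; rw [eq_of_heq hw, eq_of_heq hv]

theorem rda_heq_rda {S T U U' : Q.Obj} (h : U = U') {v : Q.Hom T U} {v' : Q.Hom T U'}
    {w : Q.Hom S U} {w' : Q.Hom S U'} (hv : HEq v v') (hw : HEq w w') :
    Q.rda v w = Q.rda v' w' := by
  subst h; rw [eq_of_heq hv, eq_of_heq hw]

theorem iInf_lda_heq {ι : Sort*} {S : ι → Q.Obj} {T U U' : Q.Obj} (h : U = U')
    {w : ∀ i, Q.Hom (S i) U} {w' : ∀ i, Q.Hom (S i) U'} (σ : ∀ i, Q.Hom (S i) T)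
    (hw : ∀ i, HEq (w i) (w' i)) :
    HEq (⨅ i, Q.lda (w i) (σ i)) (⨅ i, Q.lda (w' i) (σ i)) := by
  subst h
  obtain rfl : w = w' := funext fun i => eq_of_heq (hw i)
  rfl

theorem iInf_rda_heq {ι : Sort*} {S : ι → Q.Obj} {T U U' : Q.Obj} (h : U = U')
    {w : ∀ i, Q.Hom U (S i)} {w' : ∀ i, Q.Hom U' (S i)} (τ : ∀ i, Q.Hom T (S i))
    (hw : ∀ i, HEq (w i) (w' i)) :
    HEq (⨅ i, Q.rda (τ i) (w i)) (⨅ i, Q.rda (τ i) (w' i)) := by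
  subst h
  obtain rfl : w = w' := funext fun i => eq_of_heq (hw i)
  rfl

theorem lda_mono {S T U : Q.Obj} {w w' : Q.Hom S U} (h : w ≤ w') (u : Q.Hom S T) :
    Q.lda w u ≤ Q.lda w' u :=
  le_lda.mp (le_trans (comp_lda_le w u) h)

theorem lda_anti {S T U : Q.Obj} {u u' : Q.Hom S T} (h : u ≤ u') (w : Q.Hom S U) :
    Q.lda w u' ≤ Q.lda w u :=
  le_lda.mp (le_trans (comp_mono_right _ h) (comp_lda_le w u'))

theorem rda_anti {S T U : Q.Obj} {v v' : Q.Hom T U} (h : v ≤ v') (w : Q.Hom S U) :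
    Q.rda v' w ≤ Q.rda v w :=
  le_rda.mp (le_trans (comp_mono_left h _) (comp_rda_le v' w))

theorem lda_one {S T : Q.Obj} (w : Q.Hom S T) : Q.lda w (Q.one S) = w := by
  refine le_antisymm ?_ (le_lda.mp (le_of_eq (Q.comp_one w)))
  simpa only [Q.comp_one] using comp_lda_le w (Q.one S)

theorem rda_one {S T : Q.Obj} (w : Q.Hom S T) : Q.rda (Q.one T) w = w := by
  refine le_antisymm ?_ (le_rda.mp (le_of_eq (Q.one_comp w)))
  simpa only [Q.one_comp] using comp_rda_le (Q.one T) w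

theorem comp_iSup {ι : Sort*} {S T U : Q.Obj} (v : Q.Hom T U) (u : ι → Q.Hom S T) :
    Q.comp v (⨆ i, u i) = ⨆ i, Q.comp v (u i) := by
  rw [iSup, Q.comp_sSup, iSup_range]

theorem lda_iSup {ι : Sort*} {S T U : Q.Obj} (w : Q.Hom S U) (u : ι → Q.Hom S T) :
    Q.lda w (⨆ i, u i) = ⨅ i, Q.lda w (u i) := by
  refine le_antisymm (le_iInf fun i => lda_anti (le_iSup u i) w) (le_lda.mp ?_)
  rw [comp_iSup]
  exact iSup_le fun i => le_trans
    (comp_mono_left (iInf_le (fun i => Q.lda w (u i)) i) (u i)) (comp_lda_le w (u i))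

theorem lda_iInf {ι : Sort*} {S T U : Q.Obj} (w : ι → Q.Hom S U) (u : Q.Hom S T) :
    Q.lda (⨅ i, w i) u = ⨅ i, Q.lda (w i) u :=
  le_antisymm (le_iInf fun i => lda_mono (iInf_le w i) u) (le_lda.mp (le_iInf fun i =>
    le_trans (comp_mono_left (iInf_le (fun i => Q.lda (w i) u) i) u) (comp_lda_le (w i) u)))

theorem lda_comp {S T T' U : Q.Obj} (w : Q.Hom S U) (v : Q.Hom T T') (u : Q.Hom S T) :
    Q.lda w (Q.comp v u) = Q.lda (Q.lda w u) v := by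
  refine le_antisymm (le_lda.mp (le_lda.mp ?_)) (le_lda.mp ?_)
  · rw [Q.comp_assoc]; exact comp_lda_le w (Q.comp v u)
  · rw [← Q.comp_assoc]
    exact le_trans (comp_mono_left (comp_lda_le (Q.lda w u) v) u) (comp_lda_le w u)

end Quantaloid

open Quantaloid

section UnderlyingOrder

variable {Q : Quantaloid.{u}} {D E : QCat Q}

theorem QCat.le_of_one_le_cast {T : Q.Obj} {X Y : E.Obj} (hX : E.ext X = T)
    (hY : E.ext Y = T) (h : Q.one T ≤ Q.cast hX hY (E.hom X Y)) : E.le X Y := by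
  subst hX
  exact ⟨hY.symm, (le_cast_iff rfl hY).mp h⟩

theorem QCat.cast_hom_le_of_le_left {X X' : E.Obj} (h : E.le X' X) (Z : E.Obj) :
    Q.cast h.1.symm rfl (E.hom X Z) ≤ E.hom X' Z := by
  obtain ⟨hE, hle⟩ := h
  calc Q.cast hE.symm rfl (E.hom X Z) = Q.comp (E.hom X Z) (Q.cast rfl hE (Q.one _)) :=
        (comp_cast_one hE _).symm
    _ ≤ Q.comp (E.hom X Z) (E.hom X' X) := comp_mono_right _ hle
    _ ≤ E.hom X' Z := E.comp_le X' X Z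

theorem QCat.cast_hom_le_of_le_right {Y Y' : E.Obj} (h : E.le Y Y') (Z : E.Obj) :
    Q.cast rfl h.1 (E.hom Z Y) ≤ E.hom Z Y' := by
  obtain ⟨hE, hle⟩ := h
  calc Q.cast rfl hE (E.hom Z Y) = Q.comp (Q.cast rfl hE (Q.one _)) (E.hom Z Y) :=
        (one_cast_comp hE _).symm
    _ ≤ Q.comp (E.hom Y Y') (E.hom Z Y) := comp_mono_left hle _
    _ ≤ E.hom Z Y' := E.comp_le Z Y Y'

theorem QCat.hom_heq_of_iso_left {X X' : E.Obj} (h : E.iso X X') (Z : E.Obj) :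
    HEq (E.hom X Z) (E.hom X' Z) := by
  rw [← cast_eq_iff_heq h.2.1.symm rfl]
  refine le_antisymm (cast_hom_le_of_le_left h.2 Z) ?_
  rw [le_cast_iff]
  exact cast_hom_le_of_le_left h.1 Z

theorem QCat.hom_heq_of_iso_right {Y Y' : E.Obj} (h : E.iso Y Y') (Z : E.Obj) :
    HEq (E.hom Z Y) (E.hom Z Y') := by
  rw [← cast_eq_iff_heq rfl h.1.1]
  refine le_antisymm (cast_hom_le_of_le_right h.1 Z) ?_
  rw [le_cast_iff]
  exact cast_hom_le_of_le_right h.2 Z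

theorem QCat.le.trans {X Y Z : E.Obj} (h₁ : E.le X Y) (h₂ : E.le Y Z) : E.le X Z := by
  refine ⟨h₁.1.trans h₂.1, le_trans ?_ (cast_hom_le_of_le_right h₂ X)⟩
  rw [← Quantaloid.cast_cast rfl h₁.1 rfl h₂.1]
  exact cast_le_cast_iff rfl h₂.1 |>.mpr h₁.2

theorem QCat.iso_refl (E : QCat Q) (X : E.Obj) : E.iso X X :=
  ⟨⟨rfl, E.one_le X⟩, ⟨rfl, E.one_le X⟩⟩

theorem QCat.iso.symm {X Y : E.Obj} (h : E.iso X Y) : E.iso Y X := ⟨h.2, h.1⟩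

theorem QCat.iso.trans {X Y Z : E.Obj} (h₁ : E.iso X Y) (h₂ : E.iso Y Z) : E.iso X Z :=
  ⟨h₁.1.trans h₂.1, h₂.2.trans h₁.2⟩

theorem QFun.le_map (F : QFun D E) {X Y : D.Obj} (h : D.le X Y) :
    E.le (F.obj X) (F.obj Y) := by
  obtain ⟨hE, hle⟩ := h
  refine ⟨(F.ext X).trans (hE.trans (F.ext Y).symm), ?_⟩
  have := (le_cast_iff _ _).mp (hle.trans (F.hom_le X Y))
  convert this using 1
  rw [← cast_one (F.ext X), Quantaloid.cast_cast, Quantaloid.cast_cast]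

theorem QFun.iso_map (F : QFun D E) {X Y : D.Obj} (h : D.iso X Y) :
    E.iso (F.obj X) (F.obj Y) :=
  ⟨F.le_map h.1, F.le_map h.2⟩

end UnderlyingOrder

section WeightedColimits

variable {Q : Quantaloid.{u}} {A C E X : QCat Q}

theorem QFun.graph_heq (F : QFun A E) (a : A.Obj) (Y : E.Obj) :
    HEq (F.graph a Y) (E.hom (F.obj a) Y) :=
  Quantaloid.cast_heq _ _ _

theorem QFun.cograph_heq (G : QFun C E) (Y : E.Obj) (c : C.Obj) :
    HEq (G.cograph Y c) (E.hom Y (G.obj c)) :=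
  Quantaloid.cast_heq _ _ _

theorem IsColim.hom_eq {F : QFun A E} {T : Q.Obj} {σ : Sink A T} {Y : E.Obj}
    (hY : IsColim F σ Y) (Z : E.Obj) :
    Q.cast hY.ext rfl (E.hom Y Z) = ⨅ a, Q.lda (F.graph a Z) (σ a PUnit.unit) :=
  hY.hom Z

theorem IsLim.hom_eq {G : QFun C E} {T : Q.Obj} {τ : Source C T} {Y : E.Obj}
    (hY : IsLim G τ Y) (Z : E.Obj) :
    Q.cast rfl hY.ext (E.hom Z Y) = ⨅ c, Q.rda (τ PUnit.unit c) (G.cograph Z c) :=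
  hY.hom Z

theorem IsColim.hom_heq {F : QFun A E} {T : Q.Obj} {σ : Sink A T} {Y : E.Obj}
    (hY : IsColim F σ Y) (Z : E.Obj) :
    HEq (E.hom Y Z) (⨅ a, Q.lda (F.graph a Z) (σ a PUnit.unit)) :=
  (cast_eq_iff_heq _ _).mp (hY.hom_eq Z)

theorem IsLim.hom_heq {G : QFun C E} {T : Q.Obj} {τ : Source C T} {Y : E.Obj}
    (hY : IsLim G τ Y) (Z : E.Obj) :
    HEq (E.hom Z Y) (⨅ c, Q.rda (τ PUnit.unit c) (G.cograph Z c)) :=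
  (cast_eq_iff_heq _ _).mp (hY.hom_eq Z)

theorem IsColim.le_graph {F : QFun A E} {T : Q.Obj} {σ : Sink A T} {Y : E.Obj}
    (hY : IsColim F σ Y) (a : A.Obj) : σ a PUnit.unit ≤ Q.cast rfl hY.ext (F.graph a Y) := by
  have h : Q.cast hY.ext rfl (Q.one (E.ext Y)) ≤ Q.lda (F.graph a Y) (σ a PUnit.unit) :=
    (cast_le_cast_iff _ _).mpr (E.one_le Y) |>.trans ((hY.hom Y).le.trans (iInf_le _ a))
  have := (comp_mono_left h _).trans (comp_lda_le _ _)
  erw [cast_one_comp] at this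
  erw [le_cast_iff]
  exact this

theorem IsLim.le_cograph {G : QFun C E} {T : Q.Obj} {τ : Source C T} {Y : E.Obj}
    (hY : IsLim G τ Y) (c : C.Obj) : τ PUnit.unit c ≤ Q.cast hY.ext rfl (G.cograph Y c) := by
  have h : Q.cast rfl hY.ext (Q.one (E.ext Y)) ≤ Q.rda (τ PUnit.unit c) (G.cograph Y c) :=
    (cast_le_cast_iff _ _).mpr (E.one_le Y) |>.trans ((hY.hom Y).le.trans (iInf_le _ c))
  have := (comp_mono_right _ h).trans (comp_rda_le _ _)
  erw [comp_cast_one] at this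
  erw [le_cast_iff]
  exact this

theorem IsColim.le_cast_hom {F : QFun A E} {T T' : Q.Obj} {σ : Sink A T} {σ' : Sink A T'}
    {Y Y' : E.Obj} (hY : IsColim F σ Y) (hY' : IsColim F σ' Y') (u : Q.Hom T T')
    (hu : ∀ a, Q.comp u (σ a PUnit.unit) ≤ σ' a PUnit.unit) :
    u ≤ Q.cast hY.ext hY'.ext (E.hom Y Y') := by
  rw [← Quantaloid.cast_cast hY.ext rfl rfl hY'.ext, hY.hom_eq Y']
  erw [cast_iInf]
  refine le_iInf fun a => ?_
  erw [cast_lda rfl rfl hY'.ext, cast_rfl]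
  exact le_lda.mp ((hu a).trans (hY'.le_graph a))

theorem IsColim.iso {F : QFun A E} {T : Q.Obj} {σ : Sink A T} {Y Y' : E.Obj}
    (hY : IsColim F σ Y) (hY' : IsColim F σ Y') : E.iso Y Y' :=
  ⟨QCat.le_of_one_le_cast _ _ (hY.le_cast_hom hY' _ fun _ => (Q.one_comp _).le),
    QCat.le_of_one_le_cast _ _ (hY'.le_cast_hom hY _ fun _ => (Q.one_comp _).le)⟩

theorem QFun.hom_comp_graph_le (F : QFun A X) (a : A.Obj) (x z : X.Obj) :
    Q.comp (X.hom x z) (F.graph a x) ≤ F.graph a z := by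
  rw [QFun.graph, ← cast_rfl (X.hom x z), cast_comp_cast]
  exact (cast_le_cast_iff _ _).mpr (X.comp_le _ _ _)

theorem QFun.cograph_comp_hom_le (G : QFun C X) (c : C.Obj) (x z : X.Obj) :
    Q.comp (G.cograph x c) (X.hom z x) ≤ G.cograph z c := by
  rw [QFun.cograph, ← cast_rfl (X.hom z x), cast_comp_cast]
  exact (cast_le_cast_iff _ _).mpr (X.comp_le _ _ _)

theorem QFun.Dense.isColim_graph {F : QFun A X} (hF : F.Dense) (x : X.Obj) :
    IsColim F (fun a _ => F.graph a x) x := by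
  obtain ⟨T, σ, hx⟩ := hF x
  refine ⟨rfl, fun z => ?_⟩
  show X.hom x z = ⨅ a, Q.lda (F.graph a z) (F.graph a x)
  refine le_antisymm (le_iInf fun a => le_lda.mp (F.hom_comp_graph_le a x z)) ?_
  refine (cast_le_cast_iff hx.ext rfl).mp ?_
  rw [hx.hom_eq z, cast_iInf]
  refine iInf_mono fun a => ?_
  rw [cast_lda rfl hx.ext rfl]
  exact lda_anti (hx.le_graph a) _

theorem QFun.Codense.isLim_cograph {G : QFun C X} (hG : G.Codense) (x : X.Obj) :
    IsLim G (fun _ c => G.cograph x c) x := by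
  obtain ⟨T, τ, hx⟩ := hG x
  refine ⟨rfl, fun z => ?_⟩
  show X.hom z x = ⨅ c, Q.rda (G.cograph x c) (G.cograph z c)
  refine le_antisymm (le_iInf fun c => le_rda.mp (G.cograph_comp_hom_le c x z)) ?_
  refine (cast_le_cast_iff rfl hx.ext).mp ?_
  rw [hx.hom_eq z, cast_iInf]
  refine iInf_mono fun c => ?_
  rw [cast_rda rfl hx.ext rfl]
  exact rda_anti (hx.le_cograph c) _

theorem QFun.Dense.isColim {F : QFun A X} (hF : F.Dense) {T : Q.Obj} {σ : Sink A T}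
    {x : X.Obj} (hx : X.ext x = T) (hσ : ∀ a, HEq (X.hom (F.obj a) x) (σ a PUnit.unit)) :
    IsColim F σ x := by
  subst hx
  obtain rfl : σ = fun a _ => F.graph a x := funext fun a => funext fun _ =>
    (eq_of_heq ((F.graph_heq a x).trans (hσ a))).symm
  exact hF.isColim_graph x

theorem QFun.Codense.isLim {G : QFun C X} (hG : G.Codense) {T : Q.Obj} {τ : Source C T}
    {x : X.Obj} (hx : X.ext x = T) (hτ : ∀ c, HEq (X.hom x (G.obj c)) (τ PUnit.unit c)) :
    IsLim G τ x := by
  subst hx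
  obtain rfl : τ = fun _ c => G.cograph x c := funext fun _ => funext fun c =>
    (eq_of_heq ((G.cograph_heq x c).trans (hτ c))).symm
  exact hG.isLim_cograph x

theorem IsColim.hom_heq_of_hom_heq {F : QFun A X} {K : QFun A E} {T : Q.Obj}
    {σ : Sink A T} {x : X.Obj} {e : E.Obj} (hx : IsColim F σ x) (he : IsColim K σ e)
    {y : X.Obj} {z : E.Obj} (h : X.ext y = E.ext z)
    (hyz : ∀ a, HEq (X.hom (F.obj a) y) (E.hom (K.obj a) z)) : HEq (X.hom x y) (E.hom e z) :=
  (hx.hom_heq y).trans ((iInf_lda_heq h _ fun a => (F.graph_heq a y).trans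
    ((hyz a).trans (K.graph_heq a z).symm)).trans (he.hom_heq z).symm)

theorem IsLim.hom_heq_of_hom_heq {G : QFun C X} {H : QFun C E} {T : Q.Obj}
    {τ : Source C T} {x : X.Obj} {e : E.Obj} (hx : IsLim G τ x) (he : IsLim H τ e)
    {y : X.Obj} {z : E.Obj} (h : X.ext y = E.ext z)
    (hyz : ∀ c, HEq (X.hom y (G.obj c)) (E.hom z (H.obj c))) : HEq (X.hom y x) (E.hom z e) :=
  (hx.hom_heq y).trans ((iInf_rda_heq h _ fun c => (G.cograph_heq y c).trans
    ((hyz c).trans (H.cograph_heq z c).symm)).trans (he.hom_heq z).symm)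

end WeightedColimits

section Totality

variable {Q : Quantaloid.{u}} {A E : QCat Q}

theorem QCat.iInf_lda_hom (E : QCat Q) (w z : E.Obj) :
    ⨅ y : E.Obj, Q.lda (E.hom y z) (E.hom y w) = E.hom w z := by
  refine le_antisymm ((iInf_le _ w).trans ?_) (le_iInf fun y => le_lda.mp (E.comp_le y w z))
  exact (lda_anti (E.one_le w) _).trans (lda_one _).le

theorem QCat.Total.exists_isColim (hE : E.Total) (F : QFun A E) {T : Q.Obj} (σ : Sink A T) :
    ∃ Y : E.Obj, IsColim F σ Y := by
  obtain ⟨Y, hY⟩ := hE T fun y _ => ⨆ a, Q.comp (σ a PUnit.unit) (F.cograph y a)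
  refine ⟨Y, hY.ext, fun Z => ?_⟩
  rw [hY.hom Z]
  show ⨅ y, Q.lda (E.hom y Z) (⨆ a, Q.comp (σ a PUnit.unit) (F.cograph y a)) =
    ⨅ a, Q.lda (F.graph a Z) (σ a PUnit.unit)
  simp only [lda_iSup, lda_comp]
  rw [iInf_comm]
  refine iInf_congr fun a => ?_
  rw [← lda_iInf]
  congr 1
  have := congrArg (Q.cast (F.ext a) rfl) (E.iInf_lda_hom (F.obj a) Z)
  rw [cast_iInf] at this
  simp only [cast_lda rfl (F.ext a) rfl, cast_rfl] at this
  exact this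

end Totality

section Adjunction

variable {Q : Quantaloid.{u}} {A C D E : QCat Q} {L : QFun D E} {R : QFun E D}

theorem QAdj.hom_heq (adj : QAdj L R) (d : D.Obj) (e : E.Obj) :
    HEq (E.hom (L.obj d) e) (D.hom d (R.obj e)) :=
  (cast_eq_cast_iff_heq _ _ _ _).mp (adj d e)

theorem QAdj.isColim_comp (adj : QAdj L R) {K : QFun A D} {T : Q.Obj} {σ : Sink A T}
    {d : D.Obj} (hd : IsColim K σ d) : IsColim (L.comp K) σ (L.obj d) := by
  refine ⟨(L.ext d).trans hd.ext, fun Z => (cast_eq_iff_heq _ _).mpr ?_⟩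
  refine (adj.hom_heq d Z).trans ((hd.hom_heq (R.obj Z)).trans
    (iInf_lda_heq (R.ext Z) _ fun a => ?_))
  exact (K.graph_heq a _).trans
    ((adj.hom_heq (K.obj a) Z).symm.trans ((L.comp K).graph_heq a Z).symm)

theorem QAdj.isLim_comp (adj : QAdj L R) {H : QFun C E} {T : Q.Obj} {τ : Source C T}
    {e : E.Obj} (he : IsLim H τ e) : IsLim (R.comp H) τ (R.obj e) := by
  refine ⟨(R.ext e).trans he.ext, fun Z => (cast_eq_iff_heq _ _).mpr ?_⟩
  refine (adj.hom_heq Z e).symm.trans ((he.hom_heq (L.obj Z)).trans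
    (iInf_rda_heq (L.ext Z) _ fun c => ?_))
  exact (H.cograph_heq _ c).trans
    ((adj.hom_heq Z (H.obj c)).trans ((R.comp H).cograph_heq Z c).symm)

theorem QAdj.le_unit (adj : QAdj L R) (d : D.Obj) : D.le d (R.obj (L.obj d)) := by
  refine QCat.le_of_one_le_cast (L.ext d).symm (R.ext _) ?_
  rw [(cast_eq_iff_heq _ _).mpr (adj.hom_heq d (L.obj d)).symm]
  exact E.one_le _

theorem QAdj.counit_le (adj : QAdj L R) (e : E.Obj) : E.le (L.obj (R.obj e)) e := by
  refine QCat.le_of_one_le_cast (L.ext _) (R.ext e).symm ?_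
  rw [(cast_eq_iff_heq _ _).mpr (adj.hom_heq (R.obj e) e)]
  exact D.one_le _

theorem QAdj.iso_right_obj (adj : QAdj L R) (e : E.Obj) :
    D.iso (R.obj (L.obj (R.obj e))) (R.obj e) :=
  ⟨R.le_map (adj.counit_le e), adj.le_unit (R.obj e)⟩

def QAdj.toFix (adj : QAdj L R) : QFun E (D.fix (R.comp L)) where
  obj e := ⟨R.obj e, adj.iso_right_obj e⟩
  ext := R.ext
  hom_le := R.hom_le

theorem QAdj.hom_heq_hom_right_map (adj : QAdj L R) (d : D.Obj) (e : E.Obj) :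
    HEq (E.hom (L.obj d) e) (D.hom (R.obj (L.obj d)) (R.obj e)) := by
  rw [← cast_eq_iff_heq (R.ext (L.obj d)).symm (R.ext e).symm]
  refine le_antisymm ((le_cast_iff _ _).mp (R.hom_le _ _)) ?_
  refine le_of_le_of_heq (adj.le_unit d).1 rfl (Quantaloid.cast_heq _ _ _) ?_
    (QCat.cast_hom_le_of_le_left (adj.le_unit d) (R.obj e))
  exact (adj.hom_heq d e).symm.trans (Quantaloid.cast_heq _ _ _).symm

end Adjunction

section Equivalence

variable {Q : Quantaloid.{u}} {A C X Y : QCat Q}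

theorem QFun.hom_heq_of_iso_comp (F : QFun X Y) (G : QFun Y X)
    (hGF : ∀ x, X.iso (G.obj (F.obj x)) x) (u v : X.Obj) :
    HEq (Y.hom (F.obj u) (F.obj v)) (X.hom u v) := by
  rw [← cast_eq_iff_heq (F.ext u) (F.ext v)]
  refine le_antisymm ?_ (F.hom_le u v)
  refine le_of_le_of_heq (F.ext u) (F.ext v) (Quantaloid.cast_heq _ _ _).symm ?_
    (G.hom_le (F.obj u) (F.obj v))
  exact (Quantaloid.cast_heq _ _ _).trans
    ((QCat.hom_heq_of_iso_left (hGF u) _).trans (QCat.hom_heq_of_iso_right (hGF v) _))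

theorem QFun.EssSurj.dense {F : QFun A X} (hF : F.EssSurj) : F.Dense := by
  refine fun x => ⟨X.ext x, fun a _ => F.graph a x, rfl, fun z => ?_⟩
  obtain ⟨a, hx⟩ := hF x
  show X.hom x z = ⨅ b, Q.lda (F.graph b z) (F.graph b x)
  refine le_antisymm (le_iInf fun b => le_lda.mp (F.hom_comp_graph_le b x z))
    ((iInf_le _ a).trans ?_)
  erw [lda_heq_lda ((F.ext a).symm.trans hx.1.1.symm)
    ((F.graph_heq a z).trans (QCat.hom_heq_of_iso_left hx.symm z))
    ((F.graph_heq a x).trans (QCat.hom_heq_of_iso_left hx.symm x))]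
  exact (lda_anti (X.one_le x) _).trans (lda_one _).le

theorem QFun.EssSurj.codense {G : QFun C X} (hG : G.EssSurj) : G.Codense := by
  refine fun x => ⟨X.ext x, fun _ c => G.cograph x c, rfl, fun z => ?_⟩
  obtain ⟨c, hx⟩ := hG x
  show X.hom z x = ⨅ c', Q.rda (G.cograph x c') (G.cograph z c')
  refine le_antisymm (le_iInf fun c' => le_rda.mp (G.cograph_comp_hom_le c' x z))
    ((iInf_le _ c).trans ?_)
  erw [rda_heq_rda ((G.ext c).symm.trans hx.1.1.symm)
    ((G.cograph_heq x c).trans (QCat.hom_heq_of_iso_right hx.symm x))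
    ((G.cograph_heq z c).trans (QCat.hom_heq_of_iso_right hx.symm z))]
  exact (rda_anti (X.one_le x) _).trans (rda_one _).le

end Equivalence

section FixedPointRepresentation

variable {Q : Quantaloid.{u}} {A C D E X : QCat Q} {L : QFun D E} {R : QFun E D}
  {F : QFun A X} {K : QFun A D} {G : QFun C X} {H : QFun C E}

theorem exists_dense_codense_of_qEquiv_fix (adj : QAdj L R) (hX : QEquiv X (D.fix (R.comp L))) :
    ∃ (A C : QCat Q) (F : QFun A X) (K : QFun A D) (G : QFun C X) (H : QFun C E),
      F.Dense ∧ K.Dense ∧ G.Codense ∧ H.Codense ∧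
      ∀ a c, HEq (E.hom (L.obj (K.obj a)) (H.obj c)) (X.hom (F.obj a) (G.obj c)) := by
  obtain ⟨Φ, Ψ, hΨΦ, hΦΨ⟩ := hX
  have hF : (Ψ.comp (adj.toFix.comp L)).EssSurj := fun x =>
    ⟨(Φ.obj x).1, (hΨΦ x).symm.trans (Ψ.iso_map (Φ.obj x).2.symm)⟩
  have hG : (Ψ.comp adj.toFix).EssSurj := fun x =>
    let ⟨d, hd⟩ := hF x
    ⟨L.obj d, hd⟩
  refine ⟨D, E, _, QFun.id D, _, QFun.id E, hF.dense,
    QFun.EssSurj.dense fun d => ⟨d, D.iso_refl d⟩, hG.codense,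
    QFun.EssSurj.codense fun e => ⟨e, E.iso_refl e⟩, fun d e => ?_⟩
  exact (adj.hom_heq_hom_right_map d e).trans
    (Ψ.hom_heq_of_iso_comp Φ hΦΨ (adj.toFix.obj (L.obj d)) (adj.toFix.obj e)).symm

theorem QAdj.hom_heq_of_isColim (adj : QAdj L R)
    (compat : ∀ a c, HEq (E.hom (L.obj (K.obj a)) (H.obj c)) (X.hom (F.obj a) (G.obj c)))
    {T : Q.Obj} {σ : Sink A T} {d : D.Obj} {x : X.Obj} (hd : IsColim K σ d)
    (hx : IsColim F σ x) (c : C.Obj) : HEq (E.hom (L.obj d) (H.obj c)) (X.hom x (G.obj c)) :=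
  (adj.isColim_comp hd).hom_heq_of_hom_heq hx ((H.ext c).trans (G.ext c).symm) fun a =>
    compat a c

theorem QAdj.hom_rl_heq_of_isColim (adj : QAdj L R)
    (compat : ∀ a c, HEq (E.hom (L.obj (K.obj a)) (H.obj c)) (X.hom (F.obj a) (G.obj c)))
    (hG : G.Codense) (hH : H.Codense) {T : Q.Obj} {σ : Sink A T} {d : D.Obj} {x : X.Obj}
    (hd : IsColim K σ d) (hx : IsColim F σ x) (a : A.Obj) :
    HEq (D.hom (K.obj a) (R.obj (L.obj d))) (X.hom (F.obj a) x) := by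
  have hLd : IsLim H (fun _ c => G.cograph x c) (L.obj d) :=
    hH.isLim ((L.ext d).trans (hd.ext.trans hx.ext.symm)) fun c =>
      (adj.hom_heq_of_isColim compat hd hx c).trans (G.cograph_heq x c).symm
  exact (adj.isLim_comp hLd).hom_heq_of_hom_heq (hG.isLim_cograph x)
    ((K.ext a).trans (F.ext a).symm) fun c => (adj.hom_heq _ _).symm.trans (compat a c)

theorem qEquiv_fix_of_dense_codense (hD : D.Total) (hX : X.Total) (adj : QAdj L R)
    (hF : F.Dense) (hK : K.Dense) (hG : G.Codense) (hH : H.Codense)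
    (compat : ∀ a c, HEq (E.hom (L.obj (K.obj a)) (H.obj c)) (X.hom (F.obj a) (G.obj c))) :
    QEquiv X (D.fix (R.comp L)) := by
  choose Φ hΦ using fun x => hD.exists_isColim K fun a _ => F.graph a x
  choose Ψ hΨ using fun w => hX.exists_isColim F fun a _ => K.graph a w
  have hRLΦ_graph : ∀ x a, HEq (D.hom (K.obj a) (R.obj (L.obj (Φ x)))) (X.hom (F.obj a) x) :=
    fun x => adj.hom_rl_heq_of_isColim compat hG hH (hΦ x) (hF.isColim_graph x)
  have hRLΦ : ∀ x, D.iso (R.obj (L.obj (Φ x))) (Φ x) := fun x =>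
    (hK.isColim ((R.ext _).trans ((L.ext _).trans (hΦ x).ext)) fun a =>
      (hRLΦ_graph x a).trans (F.graph_heq a x).symm).iso (hΦ x)
  have hRLΨ_graph : ∀ w a, HEq (D.hom (K.obj a) (R.obj (L.obj w))) (X.hom (F.obj a) (Ψ w)) :=
    fun w => adj.hom_rl_heq_of_isColim compat hG hH (hK.isColim_graph w) (hΨ w)
  refine ⟨⟨fun x => ⟨Φ x, hRLΦ x⟩, fun x => (hΦ x).ext,
      fun x y => (hΦ x).le_cast_hom (hΦ y) _ fun a => F.hom_comp_graph_le a x y⟩,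
    ⟨fun w => Ψ w.1, fun w => (hΨ w.1).ext,
      fun w w' => (hΨ w.1).le_cast_hom (hΨ w'.1) _ fun a => K.hom_comp_graph_le a w.1 w'.1⟩,
    fun x => (hΨ (Φ x)).iso (hF.isColim (hΦ x).ext.symm fun a => ?_),
    fun w => (hΦ (Ψ w.1)).iso (hK.isColim (hΨ w.1).ext.symm fun a => ?_)⟩
  · exact (hRLΦ_graph x a).symm.trans
      ((QCat.hom_heq_of_iso_right (hRLΦ x) _).trans (K.graph_heq a _).symm)
  · exact (QCat.hom_heq_of_iso_right w.2 _).symm.trans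
      ((hRLΨ_graph w.1 a).trans (F.graph_heq a _).symm)

end FixedPointRepresentation

theorem fix_representation_dense_general {Q : Quantaloid.{u}} {D E : QCat Q}
    (hD : D.Total) (L : QFun D E) (R : QFun E D) (adj : QAdj L R)
    (X : QCat Q) (hX : X.Total) :
    QEquiv X (QCat.fix D (QFun.comp R L)) ↔
      ∃ (A C : QCat Q) (F : QFun A X) (K : QFun A D) (G : QFun C X) (H : QFun C E),
        F.Dense ∧ K.Dense ∧ G.Codense ∧ H.Codense ∧
        ∀ (a : A.Obj) (c : C.Obj),
          Q.cast ((L.ext (K.obj a)).trans (K.ext a)) (H.ext c)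
              (E.hom (L.obj (K.obj a)) (H.obj c)) =
            Q.cast (F.ext a) (G.ext c) (X.hom (F.obj a) (G.obj c)) := by
  constructor
  · intro hFix
    obtain ⟨A, C, F, K, G, H, hF, hK, hG, hH, compat⟩ :=
      exists_dense_codense_of_qEquiv_fix adj hFix
    exact ⟨A, C, F, K, G, H, hF, hK, hG, hH, fun a c =>
      (cast_eq_cast_iff_heq _ _ _ _).mpr (compat a c)⟩
  · rintro ⟨A, C, F, K, G, H, hF, hK, hG, hH, compat⟩
    exact qEquiv_fix_of_dense_codense hD hX adj hF hK hG hH fun a c =>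
      (cast_eq_cast_iff_heq _ _ _ _).mp (compat a c)

/-- Theorem 7.5 / [Lai–Shen]: for an adjunction `L ⊣ R` between total
`Q`-categories `D` and `E`, a total `Q`-category `X` is equivalent to `Fix(RL)` if and
only if there exist dense `Q`-functors `F : A → X`, `K : A → D` and codense
`Q`-functors `G : C → X`, `H : C → E` with `E(LKa,Hc) = X(Fa,Gc)` for all objects
`a` of `A` and `c` of `C`. -/
theorem fix_representation_dense {Q : Quantaloid.{u}} {D E : QCat Q}
    (hD : D.Total) (hE : E.Total) (L : QFun D E) (R : QFun E D) (adj : QAdj L R)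
    (X : QCat Q) (hX : X.Total) :
    QEquiv X (QCat.fix D (QFun.comp R L)) ↔
      ∃ (A C : QCat Q) (F : QFun A X) (K : QFun A D) (G : QFun C X) (H : QFun C E),
        F.Dense ∧ K.Dense ∧ G.Codense ∧ H.Codense ∧
        ∀ (a : A.Obj) (c : C.Obj),
          Q.cast ((L.ext (K.obj a)).trans (K.ext a)) (H.ext c)
              (E.hom (L.obj (K.obj a)) (H.obj c)) =
            Q.cast (F.ext a) (G.ext c) (X.hom (F.obj a) (G.obj c)) :=
  fix_representation_dense_general hD L R adj X hX
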